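/- arXiv:1111.6211 — 7 statements merged into one kernel-verified Lean document; each statement's English description precedes it below -/
import Mathlib

section
/- For any numerical semigroup H, twice the genus of H is at least the Frobenius number of H plus the type of H, i.e., 2g(H) ≥ F(H) + t(H). -/
/-- A numerical semigroup, viewed as a set of integers: a set of nonnegative
integers containing 0, closed under addition, with finite complement in ℕ. -/
def IsNumericalSemigroup (S : Set ℤ) : Prop :=
  (∀ x ∈ S, 0 ≤ x) ∧ 0 ∈ S ∧ (∀ a ∈ S, ∀ b ∈ S, a + b ∈ S) ∧
    {z : ℤ | 0 ≤ z ∧ z ∉ S}.Finite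

/-- The genus: the number of nonnegative integers not in `S`. -/
noncomputable def genus (S : Set ℤ) : ℕ := {z : ℤ | 0 ≤ z ∧ z ∉ S}.ncard

/-- The Frobenius number: the largest integer not in `S`. -/
noncomputable def frob (S : Set ℤ) : ℤ := sSup {z : ℤ | z ∉ S}

/-- The set of pseudo-Frobenius numbers. -/
def PF (S : Set ℤ) : Set ℤ := {x : ℤ | x ∉ S ∧ ∀ h ∈ S, h ≠ 0 → x + h ∈ S}

/-- The type: the number of pseudo-Frobenius numbers. -/
noncomputable def typ (S : Set ℤ) : ℕ := (PF S).ncard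

/-- The multiplicity: the smallest nonzero element of `S`. -/
noncomputable def mult (S : Set ℤ) : ℤ := sInf {z : ℤ | z ∈ S ∧ z ≠ 0}

/-- The Apéry set of `S` with respect to `n`. -/
def apery (S : Set ℤ) (n : ℤ) : Set ℤ := {s ∈ S | s - n ∉ S}

/-- The dual `H* = M - M` of the maximal ideal `M = S \ {0}`. -/
def dual (S : Set ℤ) : Set ℤ :=
  {z : ℤ | ∀ m ∈ S, m ≠ 0 → z + m ∈ S ∧ z + m ≠ 0}

/-- Almost symmetric: `2 g(S) = F(S) + t(S)`. -/
def AlmostSymmetric (S : Set ℤ) : Prop := 2 * (genus S : ℤ) = frob S + (typ S : ℤ)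

/-- Symmetric: `2 g(S) = F(S) + 1`. -/
def SymmetricNS (S : Set ℤ) : Prop := 2 * (genus S : ℤ) = frob S + 1

/-- Pseudo-symmetric: `2 g(S) = F(S) + 2`. -/
def PseudoSymmetric (S : Set ℤ) : Prop := 2 * (genus S : ℤ) = frob S + 2

/-- The set of minimal generators of `S`: nonzero elements not expressible as the
sum of two nonzero elements of `S`. -/
def minGens (S : Set ℤ) : Set ℤ :=
  {x ∈ S | x ≠ 0 ∧ ∀ a ∈ S, ∀ b ∈ S, a ≠ 0 → b ≠ 0 → x ≠ a + b}

/-- The embedding dimension: the number of minimal generators. -/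
noncomputable def embdim (S : Set ℤ) : ℕ := (minGens S).ncard

/-- The gluing `⟨x S₁, y S₂⟩` of two numerical semigroups. -/
def glue (x y : ℤ) (S₁ S₂ : Set ℤ) : Set ℤ :=
  {z : ℤ | ∃ a ∈ S₁, ∃ b ∈ S₂, z = x * a + y * b}

/-!
Reflection `z ↦ F - z` in the Frobenius number `F` maps both the elements of `S` in `[0, F]` and
the pseudo-Frobenius numbers other than `F` to gaps; it is injective and the two sets are disjoint
(one lies in `S`, the other outside). As `[0, F]` consists of the `g` gaps and `F + 1 - g` elements
of `S`, this gives `(F + 1 - g) + (t - 1) ≤ g`.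
-/

theorem sub_notMem_of_mem_PF {S : Set ℤ} {x y : ℤ} (hx : x ∈ PF S) (hy : y ∉ S) (hxy : x ≠ y) :
    y - x ∉ S := fun h ↦ hy <| by
  simpa using hx.2 _ h (sub_ne_zero.2 hxy.symm)

namespace IsNumericalSemigroup

variable {S : Set ℤ}

theorem sub_notMem_of_mem (hS : IsNumericalSemigroup S) {s y : ℤ} (hs : s ∈ S) (hy : y ∉ S) :
    y - s ∉ S := fun h ↦ hy <| by simpa using hS.2.2.1 _ h _ hs

theorem neg_one_notMem (hS : IsNumericalSemigroup S) : (-1 : ℤ) ∉ S :=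
  fun h ↦ absurd (hS.1 _ h) (by norm_num)

theorem bddAbove_compl (hS : IsNumericalSemigroup S) : BddAbove {z : ℤ | z ∉ S} := by
  obtain ⟨N, hN⟩ := hS.2.2.2.bddAbove
  refine ⟨max N 0, fun z hz ↦ ?_⟩
  rcases le_or_gt 0 z with h | h
  · exact (hN ⟨h, hz⟩).trans (le_max_left _ _)
  · exact h.le.trans (le_max_right _ _)

theorem le_frob (hS : IsNumericalSemigroup S) {z : ℤ} (hz : z ∉ S) : z ≤ frob S :=
  le_csSup hS.bddAbove_compl hz

theorem frob_notMem (hS : IsNumericalSemigroup S) : frob S ∉ S :=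
  Int.csSup_mem ⟨-1, hS.neg_one_notMem⟩ hS.bddAbove_compl

theorem ncard_Icc_inter_add_genus (hS : IsNumericalSemigroup S) :
    ((Set.Icc 0 (frob S) ∩ S).ncard : ℤ) + genus S = frob S + 1 := by
  have hgaps : Set.Icc 0 (frob S) \ S = {z : ℤ | 0 ≤ z ∧ z ∉ S} :=
    Set.ext fun z ↦ ⟨fun h ↦ ⟨h.1.1, h.2⟩, fun h ↦ ⟨⟨h.1, hS.le_frob h.2⟩, h.2⟩⟩
  have hF : -1 ≤ frob S := hS.le_frob hS.neg_one_notMem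
  rw [genus, ← hgaps, ← Nat.cast_add,
    Set.ncard_inter_add_ncard_sdiff_eq_ncard _ _ (Set.finite_Icc _ _), ← Finset.coe_Icc,
    Set.ncard_coe_finset, Int.card_Icc_of_le _ _ (by omega), sub_zero]

theorem ncard_Icc_inter_add_ncard_PF_le_genus (hS : IsNumericalSemigroup S) :
    (Set.Icc 0 (frob S) ∩ S).ncard + (PF S \ {frob S}).ncard ≤ genus S := by
  set F := frob S
  have hPF : PF S \ {F} ⊆ Set.Icc 0 F := fun x ⟨hx, hxF⟩ ↦
    ⟨by linarith [hS.le_frob (sub_notMem_of_mem_PF hx hS.frob_notMem hxF)], hS.le_frob hx.1⟩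
  have hdisj : Disjoint (Set.Icc 0 F ∩ S) (PF S \ {F}) :=
    Set.disjoint_left.2 fun x hx hx' ↦ hx'.1.1 hx.2
  rw [← Set.ncard_union_eq hdisj ((Set.finite_Icc 0 F).inter_of_left S)
    ((Set.finite_Icc 0 F).subset hPF)]
  refine Set.ncard_le_ncard_of_injOn (F - ·) ?_ (fun a _ b _ h ↦ by simpa using h) hS.2.2.2
  rintro x (⟨⟨hx0, hxF⟩, hx⟩ | ⟨hx, hxF⟩)
  · exact ⟨by linarith, hS.sub_notMem_of_mem hx hS.frob_notMem⟩
  · exact ⟨by linarith [(hPF ⟨hx, hxF⟩).2], sub_notMem_of_mem_PF hx hS.frob_notMem hxF⟩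

end IsNumericalSemigroup

theorem stmt0 (S : Set ℤ) (hS : IsNumericalSemigroup S) :
    frob S + (typ S : ℤ) ≤ 2 * (genus S : ℤ) := by
  have hsmall := hS.ncard_Icc_inter_add_genus
  have hreflect := hS.ncard_Icc_inter_add_ncard_PF_le_genus
  have htyp : typ S - 1 ≤ (PF S \ {frob S}).ncard :=
    Set.pred_ncard_le_ncard_sdiff_singleton (PF S) (frob S)
  omega
end

section
/- A numerical semigroup H is almost symmetric (i.e., 2g(H) = F(H) + t(H)) if and only if for every integer z ∉ H, either F(H) − z ∈ H or z is a pseudo-Frobenius number of H. -/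
theorem stmt2 (S : Set ℤ) (hS : IsNumericalSemigroup S) :
    AlmostSymmetric S ↔ ∀ z : ℤ, z ∉ S → (frob S - z ∈ S ∨ z ∈ PF S) := by
  obtain ⟨hpos, h0, hadd, hfin⟩ := hS
  set F := frob S with hFdef
  have hbdd : BddAbove {z : ℤ | z ∉ S} := by
    obtain ⟨b, hb⟩ := hfin.bddAbove
    refine ⟨max b (-1), fun z hz => ?_⟩
    rcases le_or_gt 0 z with h | h
    · exact le_max_of_le_left (hb ⟨h, hz⟩)
    · exact le_max_of_le_right (by omega)
  have hne : {z : ℤ | z ∉ S}.Nonempty := ⟨-1, fun h => by have := hpos _ h; omega⟩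
  have hFmem : F ∉ S := Int.csSup_mem hne hbdd
  have hFub : ∀ z : ℤ, z ∉ S → z ≤ F := fun z hz => le_csSup hbdd hz
  have hgt : ∀ z : ℤ, F < z → z ∈ S := fun z hz => by
    by_contra h; exact absurd (hFub z h) (not_le.mpr hz)
  have hFneg : -1 ≤ F := hFub _ (fun h => by have := hpos _ h; omega)
  set G : Set ℤ := {z | 0 ≤ z ∧ z ∉ S} with hGdef
  set A : Set ℤ := {z | 0 ≤ z ∧ z ∉ S ∧ F - z ∈ S} with hAdef
  set B : Set ℤ := {z | 0 ≤ z ∧ z ∉ S ∧ F - z ∉ S} with hBdef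
  set C : Set ℤ := {s | s ∈ S ∧ s ∈ Set.Icc 0 F} with hCdef
  set P : Set ℤ := PF S \ {F} with hPdef
  have hGfin : G.Finite := hfin
  have hAfin : A.Finite := hGfin.subset (fun z hz => ⟨hz.1, hz.2.1⟩)
  have hBfin : B.Finite := hGfin.subset (fun z hz => ⟨hz.1, hz.2.1⟩)
  have hCfin : C.Finite := (Set.finite_Icc 0 F).subset (fun z hz => hz.2)
  -- F is a pseudo-Frobenius number
  have hFPF : F ∈ PF S := by
    refine ⟨hFmem, fun h hh hh0 => hgt _ ?_⟩
    have : 0 ≤ h := hpos _ hh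
    omega
  -- PF \ {F} ⊆ B
  have hPB : P ⊆ B := by
    rintro x ⟨⟨hxS, hxPF⟩, hxF⟩
    have hxF' : x ≠ F := hxF
    have hx0 : 0 ≤ x := by
      by_contra h
      have h1 : F - x ∈ S := hgt _ (by omega)
      have h2 : F - x ≠ 0 := by omega
      have := hxPF _ h1 h2
      rw [show x + (F - x) = F by ring] at this
      exact hFmem this
    refine ⟨hx0, hxS, fun h => ?_⟩
    have h2 : F - x ≠ 0 := by omega
    have := hxPF _ h h2
    rw [show x + (F - x) = F by ring] at this
    exact hFmem this
  have hPfin : P.Finite := hBfin.subset hPB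
  -- |A| = |C|
  have himg : (fun z => F - z) '' A = C := by
    ext x
    constructor
    · rintro ⟨z, ⟨hz0, hzS, hzF⟩, rfl⟩
      refine ⟨hzF, ?_⟩
      simp only [Set.mem_Icc]
      have := hpos _ hzF
      omega
    · rintro ⟨hxS, hx0, hxF⟩
      refine ⟨F - x, ⟨by omega, fun h => ?_, by simpa using hxS⟩, by ring⟩
      have := hadd _ hxS _ h
      rw [show x + (F - x) = F by ring] at this
      exact hFmem this
  have hcard1 : A.ncard = C.ncard := by
    rw [← himg, Set.ncard_image_of_injective _ (fun a b h => by omega)]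
  -- Icc 0 F = C ∪ G
  have hunion1 : Set.Icc (0:ℤ) F = C ∪ G := by
    ext x
    simp only [Set.mem_Icc, Set.mem_union, hCdef, hGdef, Set.mem_setOf_eq]
    constructor
    · rintro ⟨h1, h2⟩
      by_cases hx : x ∈ S
      · exact Or.inl ⟨hx, h1, h2⟩
      · exact Or.inr ⟨h1, hx⟩
    · rintro (⟨_, h1, h2⟩ | ⟨h1, h2⟩)
      · exact ⟨h1, h2⟩
      · exact ⟨h1, hFub _ h2⟩
  have hdisj1 : Disjoint C G := by
    rw [Set.disjoint_left]
    rintro x ⟨hxS, _⟩ ⟨_, hxS'⟩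
    exact hxS' hxS
  have hcard2 : C.ncard + G.ncard = (F + 1).toNat := by
    have : (Set.Icc (0:ℤ) F).ncard = (F + 1).toNat := by
      rw [← Finset.coe_Icc, Set.ncard_coe_finset, Int.card_Icc]
      norm_num
    rw [← this, hunion1, Set.ncard_union_eq hdisj1 hCfin hGfin]
  -- G = A ∪ B
  have hunion2 : G = A ∪ B := by
    ext x
    simp only [hGdef, hAdef, hBdef, Set.mem_union, Set.mem_setOf_eq]
    constructor
    · rintro ⟨h1, h2⟩
      by_cases hx : F - x ∈ S
      · exact Or.inl ⟨h1, h2, hx⟩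
      · exact Or.inr ⟨h1, h2, hx⟩
    · rintro (⟨h1, h2, _⟩ | ⟨h1, h2, _⟩) <;> exact ⟨h1, h2⟩
  have hdisj2 : Disjoint A B := by
    rw [Set.disjoint_left]
    rintro x ⟨_, _, h⟩ ⟨_, _, h'⟩
    exact h' h
  have hcard3 : G.ncard = A.ncard + B.ncard := by
    rw [hunion2, Set.ncard_union_eq hdisj2 hAfin hBfin]
  -- typ = |P| + 1
  have hPFeq : PF S = insert F P := by
    ext x
    simp only [hPdef, Set.mem_insert_iff, Set.mem_diff, Set.mem_singleton_iff]
    constructor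
    · intro hx
      by_cases hxF : x = F
      · exact Or.inl hxF
      · exact Or.inr ⟨hx, hxF⟩
    · rintro (rfl | ⟨hx, _⟩)
      · exact hFPF
      · exact hx
  have hcard4 : typ S = P.ncard + 1 := by
    rw [typ, hPFeq, Set.ncard_insert_of_notMem (fun h => h.2 rfl) hPfin]
  -- genus = |G|
  have hgen : genus S = G.ncard := rfl
  -- cast facts
  have hF1 : ((F + 1).toNat : ℤ) = F + 1 := Int.toNat_of_nonneg (by omega)
  -- equivalence with B = P
  have key : (B = P) ↔ ∀ z : ℤ, z ∉ S → (F - z ∈ S ∨ z ∈ PF S) := by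
    constructor
    · intro hBP z hz
      rcases lt_or_ge z 0 with h | h
      · exact Or.inl (hgt _ (by omega))
      · by_cases hFz : F - z ∈ S
        · exact Or.inl hFz
        · right
          have : z ∈ B := ⟨h, hz, hFz⟩
          rw [hBP] at this
          exact this.1
    · intro h
      refine Set.Subset.antisymm (fun z hz => ?_) hPB
      obtain ⟨hz0, hzS, hzF⟩ := hz
      rcases h z hzS with h' | h'
      · exact absurd h' hzF
      · refine ⟨h', fun heq => ?_⟩
        rw [Set.mem_singleton_iff] at heq
        subst heq
        exact hzF (by simpa using h0)
  have cardiff : (B.ncard = P.ncard) ↔ B = P := by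
    constructor
    · intro h
      exact (Set.eq_of_subset_of_ncard_le hPB h.le hBfin).symm
    · intro h; rw [h]
  have main : AlmostSymmetric S ↔ B.ncard = P.ncard := by
    rw [AlmostSymmetric, hgen, hcard4, ← hFdef]
    omega
  rw [main, cardiff, key]
end

section
/- For any numerical semigroup H (with H ≠ ℕ), the Frobenius number of H* = M − M equals F(H) − m(H). -/
theorem stmt7 (S : Set ℤ) (hS : IsNumericalSemigroup S) (hne : S ≠ {z : ℤ | 0 ≤ z}) :
    frob (dual S) = frob S - mult S := by
  obtain ⟨hpos, h0, hadd, hfin⟩ := hS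
  -- complement of S has a nonneg element
  have hgap : ∃ z : ℤ, 0 ≤ z ∧ z ∉ S := by
    by_contra h
    push_neg at h
    exact hne (Set.eq_of_subset_of_subset (fun x hx => hpos x hx) (fun x hx => h x hx))
  -- the complement of S is bounded above
  obtain ⟨B, hB⟩ := hfin.bddAbove
  have hbdd : BddAbove {z : ℤ | z ∉ S} := by
    refine ⟨max B 0, fun z hz => ?_⟩
    rcases le_or_gt 0 z with h | h
    · exact le_trans (hB ⟨h, hz⟩) (le_max_left _ _)
    · exact le_trans h.le (le_max_right _ _)
  have hnonempty : ({z : ℤ | z ∉ S} : Set ℤ).Nonempty := by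
    obtain ⟨z, _, hz⟩ := hgap; exact ⟨z, hz⟩
  have hFmem : frob S ∈ {z : ℤ | z ∉ S} := Int.csSup_mem hnonempty hbdd
  have hFgt : ∀ z : ℤ, frob S < z → z ∈ S := by
    intro z hz
    by_contra h
    exact absurd (le_csSup hbdd h) (not_le.mpr hz)
  have hFpos : 1 ≤ frob S := by
    obtain ⟨z, hz0, hz⟩ := hgap
    have h2 : z ≤ frob S := le_csSup hbdd hz
    have hzne : z ≠ 0 := fun h => hz (h ▸ h0)
    omega
  -- multiplicity
  have hmne : ({z : ℤ | z ∈ S ∧ z ≠ 0} : Set ℤ).Nonempty := by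
    refine ⟨frob S + 1, hFgt _ (by omega), by omega⟩
  have hmbdd : BddBelow {z : ℤ | z ∈ S ∧ z ≠ 0} := ⟨0, fun z hz => hpos z hz.1⟩
  have hmmem : mult S ∈ {z : ℤ | z ∈ S ∧ z ≠ 0} := Int.csInf_mem hmne hmbdd
  have hmle : ∀ z ∈ S, z ≠ 0 → mult S ≤ z := fun z hz hz0 => csInf_le hmbdd ⟨hz, hz0⟩
  have hmpos : 1 ≤ mult S := by
    have := hpos _ hmmem.1
    have := hmmem.2
    omega
  -- key: z ∈ dual S for z > frob S - mult S
  have hdual : ∀ z : ℤ, frob S - mult S < z → z ∈ dual S := by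
    intro z hz m hm hm0
    have hle := hmle m hm hm0
    have : frob S < z + m := by omega
    exact ⟨hFgt _ this, by omega⟩
  have hnotdual : frob S - mult S ∉ dual S := by
    intro h
    have := (h (mult S) hmmem.1 hmmem.2).1
    simp only [sub_add_cancel] at this
    exact hFmem this
  -- conclude
  have hbdd' : BddAbove {z : ℤ | z ∉ dual S} := by
    refine ⟨frob S - mult S, fun z hz => ?_⟩
    by_contra h
    exact hz (hdual z (not_le.mp h))
  refine le_antisymm (csSup_le ⟨_, hnotdual⟩ fun z hz => ?_) (le_csSup hbdd' hnotdual)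
  by_contra h
  exact hz (hdual z (not_le.mp h))
end

section
/- For every numerical semigroup H there exists a numerical semigroup T ⊆ H such that T* = H, where T* is the dual of the maximal ideal of T. -/
theorem stmt8 (S : Set ℤ) (hS : IsNumericalSemigroup S) :
    ∃ T : Set ℤ, IsNumericalSemigroup T ∧ T ⊆ S ∧ dual T = S := by
  obtain ⟨hpos, h0, hadd, hfin⟩ := hS
  obtain ⟨C, hC⟩ := hfin.bddAbove
  set s₀ : ℤ := max C 0 + 1 with hs₀def
  have hs₀pos : 0 < s₀ := by have := le_max_right C 0; omega
  have hs₀S : s₀ ∈ S := by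
    by_contra h
    have hm : s₀ ∈ {z : ℤ | 0 ≤ z ∧ z ∉ S} := ⟨le_of_lt hs₀pos, h⟩
    have := hC hm
    have := le_max_left C 0
    omega
  refine ⟨insert 0 ({w : ℤ | ∃ s ∈ S, w = s₀ + s}), ⟨?_, ?_, ?_, ?_⟩, ?_, ?_⟩
  · rintro x (rfl | ⟨s, hs, rfl⟩)
    · exact le_refl 0
    · have := hpos s hs; omega
  · exact Set.mem_insert 0 _
  · rintro a (rfl | ⟨s, hs, rfl⟩) b (rfl | ⟨t, ht, rfl⟩)
    · simp
    · have : (0:ℤ) + (s₀ + t) = s₀ + t := by ring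
      rw [this]; exact Set.mem_insert_of_mem _ ⟨t, ht, rfl⟩
    · have : (s₀ + s) + 0 = s₀ + s := by ring
      rw [this]; exact Set.mem_insert_of_mem _ ⟨s, hs, rfl⟩
    · exact Set.mem_insert_of_mem _ ⟨s + (s₀ + t), hadd s hs _ (hadd s₀ hs₀S t ht), by ring⟩
  · apply Set.Finite.subset (Set.finite_Icc 0 (s₀ + max C 0))
    rintro z ⟨hz0, hzT⟩
    constructor
    · exact hz0
    · by_contra h
      push_neg at h
      have h1 : 0 ≤ z - s₀ := by omega
      have h2 : z - s₀ ∈ S := by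
        by_contra h2
        have := hC ⟨h1, h2⟩
        omega
      exact hzT (Set.mem_insert_of_mem _ ⟨z - s₀, h2, by ring⟩)
  · rintro x (rfl | ⟨s, hs, rfl⟩)
    · exact h0
    · exact hadd s₀ hs₀S s hs
  · ext z
    constructor
    · intro hz
      have hmem : s₀ ∈ insert (0:ℤ) ({w : ℤ | ∃ s ∈ S, w = s₀ + s}) :=
        Set.mem_insert_of_mem _ ⟨0, h0, by ring⟩
      obtain ⟨h1, h2⟩ := hz s₀ hmem (by omega)
      rcases h1 with h1 | ⟨s, hs, heq⟩
      · exact absurd h1 h2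
      · have : z = s := by omega
        exact this ▸ hs
    · rintro hz m (rfl | ⟨s, hs, rfl⟩) hm0
      · exact absurd rfl hm0
      · constructor
        · exact Set.mem_insert_of_mem _ ⟨s + z, hadd s hs z hz, by ring⟩
        · have := hpos z hz; have := hpos s hs; omega
end

section
/- Let H be an almost symmetric numerical semigroup with e(H) < m(H), minimally generated by a_1 < a_2 < ⋯ < a_n with n < a_1. Then the maximal element of Ap(H, a_1) is not equal to a_n. -/
/-!
Write `F` for the Frobenius number and `m` for the multiplicity. The largest element of the
Apéry set is `F + m`. Pairing the gaps under `z ↦ F - z` gives `2 g = F + 1 + |L|`, where `L` is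
the set of gaps whose reflection is again a gap, and `PF ⊆ {F} ∪ L`; hence almost symmetry
forces `L ⊆ PF`. Since `e < m`, some nonzero Apéry element `x = y + z` is not a minimal
generator, and `y - m` is a gap. If `F - (y - m) ∈ S`, then `F + m = y + (F + m - y)` is not a
minimal generator; otherwise `y - m ∈ L ⊆ PF`, so `x - m = (y - m) + z ∈ S`, contradicting
`x ∈ Ap(S, m)`.
-/

/-- Nari's `L(H)`. -/
def pairedGaps (S : Set ℤ) : Set ℤ := {z | z ∉ S ∧ frob S - z ∉ S}

namespace IsNumericalSemigroup

variable {S : Set ℤ}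

theorem nonneg (hS : IsNumericalSemigroup S) {x : ℤ} (hx : x ∈ S) : 0 ≤ x := hS.1 x hx

theorem zero_mem (hS : IsNumericalSemigroup S) : (0 : ℤ) ∈ S := hS.2.1

theorem add_mem (hS : IsNumericalSemigroup S) {x y : ℤ} (hx : x ∈ S) (hy : y ∈ S) :
    x + y ∈ S :=
  hS.2.2.1 x hx y hy

theorem mem_of_frob_lt (hS : IsNumericalSemigroup S) {z : ℤ} (hz : frob S < z) : z ∈ S :=
  not_not.1 fun h => (hS.le_frob h).not_gt hz

theorem neg_one_le_frob (hS : IsNumericalSemigroup S) : -1 ≤ frob S :=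
  hS.le_frob fun h => by linarith [hS.nonneg h]

theorem mult_mem (hS : IsNumericalSemigroup S) : mult S ∈ S ∧ mult S ≠ 0 := by
  refine Int.csInf_mem (s := {z | z ∈ S ∧ z ≠ 0})
    ⟨frob S + 2, hS.mem_of_frob_lt (by omega), ?_⟩ ⟨0, fun z hz => hS.nonneg hz.1⟩
  linarith [hS.neg_one_le_frob]

theorem mult_le (hS : IsNumericalSemigroup S) {z : ℤ} (hz : z ∈ S) (hz0 : z ≠ 0) :
    mult S ≤ z :=
  csInf_le (s := {z | z ∈ S ∧ z ≠ 0}) ⟨0, fun _ hz => hS.nonneg hz.1⟩ ⟨hz, hz0⟩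

theorem mult_pos (hS : IsNumericalSemigroup S) : 0 < mult S :=
  lt_of_le_of_ne (hS.nonneg hS.mult_mem.1) hS.mult_mem.2.symm

theorem isGreatest_apery (hS : IsNumericalSemigroup S) {n : ℤ} (hn : 0 < n) :
    IsGreatest (apery S n) (frob S + n) :=
  ⟨⟨hS.mem_of_frob_lt (by omega), by simpa using hS.frob_notMem⟩,
    fun s hs => by linarith [hS.le_frob hs.2]⟩

theorem apery_finite (hS : IsNumericalSemigroup S) (n : ℤ) : (apery S n).Finite :=
  (Set.finite_Icc 0 (frob S + n)).subset fun s hs =>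
    ⟨hS.nonneg hs.1, by linarith [hS.le_frob hs.2]⟩

/-- The least element of `S` in a residue class modulo `n` lies in the Apéry set. -/
theorem surjOn_emod_apery (hS : IsNumericalSemigroup S) {n : ℤ} (hn : 0 < n) :
    Set.SurjOn (· % n) (apery S n) (Set.Ico 0 n) := by
  rintro r ⟨hr0, hrn⟩
  set C := {s : ℤ | s ∈ S ∧ s % n = r}
  have hCne : C.Nonempty := by
    refine ⟨r + (|frob S| + 1) * n, hS.mem_of_frob_lt ?_, ?_⟩
    · nlinarith [le_abs_self (frob S), mul_nonneg (abs_nonneg (frob S)) (by omega : 0 ≤ n - 1)]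
    · rw [Int.add_mul_emod_self_right, Int.emod_eq_of_lt hr0 hrn]
  have hCbdd : BddBelow C := ⟨0, fun z hz => hS.nonneg hz.1⟩
  obtain ⟨hmin, hminr⟩ := Int.csInf_mem hCne hCbdd
  refine ⟨sInf C, ⟨hmin, fun h => ?_⟩, hminr⟩
  have := csInf_le hCbdd (show sInf C - n ∈ C from ⟨h, by rwa [Int.sub_emod_right]⟩)
  omega

theorem le_ncard_apery (hS : IsNumericalSemigroup S) {n : ℤ} (hn : 0 < n) :
    n ≤ (apery S n).ncard := by
  have hfin := hS.apery_finite n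
  have := (Set.ncard_le_ncard (hS.surjOn_emod_apery hn) (hfin.image _)).trans
    (Set.ncard_image_le hfin)
  rw [← Finset.coe_Ico, Set.ncard_coe_finset, Int.card_Ico, sub_zero] at this
  omega

theorem mult_mem_minGens (hS : IsNumericalSemigroup S) : mult S ∈ minGens S := by
  refine ⟨hS.mult_mem.1, hS.mult_mem.2, fun a ha b hb ha0 hb0 => ?_⟩
  linarith [hS.mult_le ha ha0, hS.mult_le hb hb0, hS.mult_pos]

theorem minGens_subset_insert_apery (hS : IsNumericalSemigroup S) :
    minGens S ⊆ insert (mult S) (apery S (mult S)) := by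
  rintro x ⟨hx, hx0, hmin⟩
  by_cases hxm : x - mult S ∈ S
  · left
    by_contra hne
    exact hmin _ hxm _ hS.mult_mem.1 (sub_ne_zero.2 hne) hS.mult_mem.2 (by ring)
  · exact Or.inr ⟨hx, hxm⟩

theorem minGens_finite (hS : IsNumericalSemigroup S) : (minGens S).Finite :=
  ((hS.apery_finite _).insert _).subset hS.minGens_subset_insert_apery

/-- The `mult S - 1` nonzero elements of the Apéry set cannot all be among the
`embdim S - 1` minimal generators other than `mult S`. -/
theorem exists_mem_apery_notMem_minGens (hS : IsNumericalSemigroup S)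
    (he : (embdim S : ℤ) < mult S) :
    ∃ x ∈ apery S (mult S), x ≠ 0 ∧ x ∉ minGens S := by
  by_contra! h
  have hsub : insert (mult S) (apery S (mult S)) ⊆ insert 0 (minGens S) := by
    rintro x (rfl | hx)
    · exact Or.inr hS.mult_mem_minGens
    · rcases eq_or_ne x 0 with rfl | hx0
      · exact Or.inl rfl
      · exact Or.inr (h x hx hx0)
  have hmult : mult S ∉ apery S (mult S) := fun h => h.2 (by simpa using hS.zero_mem)
  have := (Set.ncard_le_ncard hsub (hS.minGens_finite.insert 0)).trans
    (Set.ncard_insert_le 0 (minGens S))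
  rw [Set.ncard_insert_of_notMem hmult (hS.apery_finite _)] at this
  have := hS.le_ncard_apery hS.mult_pos
  unfold embdim at he
  omega

theorem pairedGaps_subset_Icc (hS : IsNumericalSemigroup S) :
    pairedGaps S ⊆ Set.Icc 0 (frob S) :=
  fun z hz => ⟨by linarith [hS.le_frob hz.2], hS.le_frob hz.1⟩

/-- Reflection `z ↦ frob S - z` matches the gaps in `[0, frob S]` whose reflection lies in `S`
with the elements of `S` in `[0, frob S]`; the remaining gaps are the paired ones. -/
theorem two_mul_genus (hS : IsNumericalSemigroup S) :
    2 * (genus S : ℤ) = frob S + 1 + (pairedGaps S).ncard := by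
  set F := frob S
  set I := Set.Icc 0 F with hIdef
  have hgaps : {z : ℤ | 0 ≤ z ∧ z ∉ S} = I \ S := by
    ext z
    exact ⟨fun h => ⟨⟨h.1, hS.le_frob h.2⟩, h.2⟩, fun h => ⟨h.1.1, h.2⟩⟩
  have hpaired : pairedGaps S = (I \ S) \ {z | F - z ∈ S} := by
    ext z
    exact ⟨fun h => ⟨⟨hS.pairedGaps_subset_Icc h, h.1⟩, h.2⟩, fun h => ⟨h.1.2, h.2⟩⟩
  have hreflect : (I \ S) ∩ {z | F - z ∈ S} = (F - ·) '' (I ∩ S) := by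
    ext z
    constructor
    · rintro ⟨⟨⟨h0, hF⟩, -⟩, hz⟩
      exact ⟨F - z, ⟨⟨by omega, by omega⟩, hz⟩, by ring⟩
    · rintro ⟨t, ⟨⟨h0, hF⟩, ht⟩, rfl⟩
      dsimp only
      refine ⟨⟨⟨by omega, by omega⟩, fun h => hS.frob_notMem ?_⟩, by simpa using ht⟩
      simpa using hS.add_mem h ht
  have hfin : I.Finite := Set.finite_Icc 0 F
  have hI := Set.ncard_inter_add_ncard_sdiff_eq_ncard I S hfin
  have hG := Set.ncard_inter_add_ncard_sdiff_eq_ncard (I \ S) {z | F - z ∈ S} hfin.sdiff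
  rw [hreflect, Set.ncard_image_of_injective _ sub_right_injective, ← hpaired] at hG
  have hIcard : (I.ncard : ℤ) = F + 1 := by
    rw [hIdef, ← Finset.coe_Icc, Set.ncard_coe_finset, Int.card_Icc, sub_zero,
      Int.toNat_of_nonneg (by linarith [hS.neg_one_le_frob])]
  unfold genus
  rw [hgaps]
  omega

theorem PF_subset_insert_frob_pairedGaps (hS : IsNumericalSemigroup S) :
    PF S ⊆ insert (frob S) (pairedGaps S) := by
  rintro f ⟨hf, hfadd⟩
  rcases eq_or_ne f (frob S) with rfl | hne
  · exact Or.inl rfl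
  · refine Or.inr ⟨hf, fun h => hS.frob_notMem ?_⟩
    simpa using hfadd _ h (sub_ne_zero.2 hne.symm)

end IsNumericalSemigroup

theorem AlmostSymmetric.pairedGaps_subset_PF {S : Set ℤ} (halm : AlmostSymmetric S)
    (hS : IsNumericalSemigroup S) : pairedGaps S ⊆ PF S := by
  have hfin : (pairedGaps S).Finite := (Set.finite_Icc _ _).subset hS.pairedGaps_subset_Icc
  have hfrob : frob S ∉ pairedGaps S := fun h => h.2 (by simpa using hS.zero_mem)
  have hcard : (insert (frob S) (pairedGaps S)).ncard ≤ typ S := by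
    rw [Set.ncard_insert_of_notMem hfrob hfin]
    have := hS.two_mul_genus
    unfold AlmostSymmetric at halm
    omega
  have hPF := Set.eq_of_subset_of_ncard_le hS.PF_subset_insert_frob_pairedGaps hcard
    (hfin.insert _)
  exact fun z hz => hPF ▸ Or.inr hz

theorem stmt12 (S : Set ℤ) (hS : IsNumericalSemigroup S)
    (halm : AlmostSymmetric S) (he : (embdim S : ℤ) < mult S)
    (w a : ℤ) (hw : IsGreatest (apery S (mult S)) w) (ha : IsGreatest (minGens S) a) :
    w ≠ a := by
  rintro rfl
  have hwF : w = frob S + mult S := hw.unique (hS.isGreatest_apery hS.mult_pos)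
  obtain ⟨x, hx, hx0, hxgen⟩ := hS.exists_mem_apery_notMem_minGens he
  obtain ⟨y, hy, z, hz, hy0, hz0, rfl⟩ : ∃ y ∈ S, ∃ z ∈ S, y ≠ 0 ∧ z ≠ 0 ∧ x = y + z := by
    by_contra! h
    exact hxgen ⟨hx.1, hx0, h⟩
  have hym : y - mult S ∉ S := fun h =>
    hx.2 (by simpa [sub_add_eq_add_sub] using hS.add_mem h hz)
  by_cases hrefl : frob S - (y - mult S) ∈ S
  · have hwy : w - y ∈ S := by convert hrefl using 1; rw [hwF]; ring
    have hxw := hw.2 hx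
    have hz_nonneg := hS.nonneg hz
    exact ha.1.2.2 y hy (w - y) hwy hy0 (by omega) (by ring)
  · have := (halm.pairedGaps_subset_PF hS ⟨hym, hrefl⟩).2 z hz hz0
    exact hx.2 (by simpa [sub_add_eq_add_sub] using this)
end

section
/- Let H be a numerical semigroup with pseudo-Frobenius numbers f_1 < ⋯ < f_{t−1} < F(H) and t(H) ≥ 2. Then F(H) − f_1 ≤ f_{t−1}. -/
theorem stmt16 (S : Set ℤ) (hS : IsNumericalSemigroup S) (ht : 2 ≤ typ S)
    (f₁ fₚ : ℤ) (h₁ : IsLeast (PF S) f₁) (hₚ : IsGreatest (PF S \ {frob S}) fₚ) :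
    frob S - f₁ ≤ fₚ := by
  obtain ⟨hpos, h0, hadd, hfin⟩ := hS
  -- gaps are bounded above
  have hbdd : BddAbove {z : ℤ | z ∉ S} := by
    have : {z : ℤ | z ∉ S} ⊆ Set.Iio 0 ∪ {z : ℤ | 0 ≤ z ∧ z ∉ S} := by
      intro z hz
      by_cases hz0 : 0 ≤ z
      · exact Or.inr ⟨hz0, hz⟩
      · exact Or.inl (by simpa using lt_of_not_ge hz0)
    exact (BddAbove.union (bddAbove_Iio) hfin.bddAbove).mono this
  have hne : ({z : ℤ | z ∉ S} : Set ℤ).Nonempty :=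
    ⟨-1, fun h => absurd (hpos _ h) (by norm_num)⟩
  have hfrobmem : frob S ∉ S := Int.csSup_mem hne hbdd
  have hle_frob : ∀ z : ℤ, z ∉ S → z ≤ frob S := fun z hz => le_csSup hbdd hz
  -- frob is a pseudo-Frobenius number
  have hfrobPF : frob S ∈ PF S := by
    refine ⟨hfrobmem, fun h hh hh0 => ?_⟩
    by_contra hc
    have h1 : frob S + h ≤ frob S := hle_frob _ hc
    have h2 : 0 < h := lt_of_le_of_ne (hpos h hh) (Ne.symm hh0)
    omega
  -- f₁ ≠ frob S
  have hf1ne : f₁ ≠ frob S := by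
    intro he
    have hsub : PF S ⊆ {frob S} := by
      intro f hf
      have h1 : f₁ ≤ f := h₁.2 hf
      have h2 : f ≤ frob S := hle_frob _ hf.1
      simp only [Set.mem_singleton_iff]; omega
    have := Set.ncard_le_ncard hsub (Set.finite_singleton _)
    simp [typ] at ht
    simp [Set.ncard_singleton] at this
    omega
  have hf1lt : f₁ < frob S :=
    lt_of_le_of_ne (hle_frob _ h₁.1.1) hf1ne
  have hf1nS : f₁ ∉ S := h₁.1.1
  -- frob S - f₁ ∉ S
  have hxnS : frob S - f₁ ∉ S := by
    intro hm
    have hne0 : frob S - f₁ ≠ 0 := by omega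
    have := h₁.1.2 _ hm hne0
    rw [add_sub_cancel] at this
    exact hfrobmem this
  -- every gap is dominated by a PF element of the form gap + s
  set T : Set ℤ := {z : ℤ | z ∉ S ∧ ∃ s ∈ S, z = (frob S - f₁) + s} with hT
  have hTne : T.Nonempty := ⟨frob S - f₁, hxnS, 0, h0, by ring⟩
  have hTbdd : BddAbove T := hbdd.mono fun z hz => hz.1
  have hfT : sSup T ∈ T := Int.csSup_mem hTne hTbdd
  obtain ⟨hfnS, s, hs, hfeq⟩ := hfT
  have hfPF : sSup T ∈ PF S := by
    refine ⟨hfnS, fun h hh hh0 => ?_⟩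
    by_contra hc
    have hmem : sSup T + h ∈ T :=
      ⟨hc, s + h, hadd s hs h hh, by rw [hfeq]; ring⟩
    have := le_csSup hTbdd hmem
    have h2 : 0 < h := lt_of_le_of_ne (hpos h hh) (Ne.symm hh0)
    omega
  have hfnefrob : sSup T ≠ frob S := by
    intro he
    have : s = f₁ := by omega
    exact hf1nS (this ▸ hs)
  have hle : sSup T ≤ fₚ := hₚ.2 ⟨hfPF, hfnefrob⟩
  have hs0 : 0 ≤ s := hpos s hs
  omega
end

section
/- Let H = ⟨xH_1, yH_2⟩ be a gluing of numerical semigroups H_1 and H_2 with gcd(x,y)=1, x ∈ H_2 a non-generator, y ∈ H_1 a non-generator. Then Ap(H, xy) = {xs + yt : s ∈ Ap(H_1, y), t ∈ Ap(H_2, x)}. -/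
lemma natmul_mem {S : Set ℤ} (h0 : 0 ∈ S) (hcl : ∀ a ∈ S, ∀ b ∈ S, a + b ∈ S)
    {y : ℤ} (hy : y ∈ S) (n : ℕ) : (n : ℤ) * y ∈ S := by
  induction n with
  | zero => simpa using h0
  | succ n ih =>
      have h : ((n : ℤ) + 1) * y = (n : ℤ) * y + y := by ring
      have := hcl _ ih _ hy
      push_cast
      rw [h]; exact this

theorem stmt17 (S₁ S₂ : Set ℤ) (h₁ : IsNumericalSemigroup S₁) (h₂ : IsNumericalSemigroup S₂)
    (x y : ℤ) (hy : y ∈ S₁) (hy' : y ∉ minGens S₁)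
    (hx : x ∈ S₂) (hx' : x ∉ minGens S₂) (hcop : Int.gcd x y = 1) :
    apery (glue x y S₁ S₂) (x * y) =
      {z : ℤ | ∃ s ∈ apery S₁ y, ∃ t ∈ apery S₂ x, z = x * s + y * t} := by
  obtain ⟨hpos₁, h0₁, hcl₁, -⟩ := h₁
  obtain ⟨hpos₂, h0₂, hcl₂, -⟩ := h₂
  have hx0 : x ≠ 0 := by
    rintro rfl
    have : y.natAbs = 1 := by simpa using hcop
    have hy0 : 0 ≤ y := hpos₁ y hy
    have : y = 1 := by omega
    subst this
    exact hy' ⟨hy, one_ne_zero, fun a ha b hb ha0 hb0 => by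
      have := hpos₁ a ha; have := hpos₁ b hb; omega⟩
  have hy0 : y ≠ 0 := by
    rintro rfl
    have : x.natAbs = 1 := by simpa using hcop
    have hx0 : 0 ≤ x := hpos₂ x hx
    have : x = 1 := by omega
    subst this
    exact hx' ⟨hx, one_ne_zero, fun a ha b hb ha0 hb0 => by
      have := hpos₂ a ha; have := hpos₂ b hb; omega⟩
  have hco : IsCoprime y x := (Int.isCoprime_iff_gcd_eq_one.mpr hcop).symm
  ext z
  constructor
  · rintro ⟨⟨a, ha, b, hb, rfl⟩, hnotin⟩
    refine ⟨a, ⟨ha, ?_⟩, b, ⟨hb, ?_⟩, rfl⟩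
    · intro hay
      exact hnotin ⟨a - y, hay, b, hb, by ring⟩
    · intro hbx
      exact hnotin ⟨a, ha, b - x, hbx, by ring⟩
  · rintro ⟨s, ⟨hs, hsy⟩, t, ⟨ht, htx⟩, rfl⟩
    refine ⟨⟨s, hs, t, ht, rfl⟩, ?_⟩
    rintro ⟨a, ha, b, hb, heq⟩
    have hdvd : y ∣ s - y - a := by
      apply hco.dvd_of_dvd_mul_left
      exact ⟨b - t, by linarith⟩
    obtain ⟨k, hk⟩ := hdvd
    have hbt : b - t = x * k := by
      have h1 : y * (b - t) = y * (x * k) := by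
        have : x * (s - y - a) = y * (b - t) := by linarith
        rw [hk] at this; linarith
      exact mul_left_cancel₀ hy0 h1
    rcases le_or_gt 0 k with hk0 | hk0
    · apply hsy
      have hmem : (k.toNat : ℤ) * y ∈ S₁ := natmul_mem h0₁ hcl₁ hy k.toNat
      have hke : (k.toNat : ℤ) = k := Int.toNat_of_nonneg hk0
      rw [hke] at hmem
      have : s - y = a + k * y := by linarith [hk]
      rw [this]
      exact hcl₁ a ha _ hmem
    · apply htx
      set m : ℤ := -k - 1 with hm
      have hm0 : 0 ≤ m := by omega
      have hmem : (m.toNat : ℤ) * x ∈ S₂ := natmul_mem h0₂ hcl₂ hx m.toNat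
      have hme : (m.toNat : ℤ) = m := Int.toNat_of_nonneg hm0
      rw [hme] at hmem
      have : t - x = b + m * x := by
        have : b - t = x * k := hbt
        rw [hm]; linarith
      rw [this]
      exact hcl₂ b hb _ hmem
end
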